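/- arXiv:2007.13330 — 3 statements merged into one kernel-verified Lean document; each statement's English description precedes it below -/
import Mathlib

section
/- There exists a constant C > 0 such that |log Φ_n − φ(n) log α| ≤ C for every integer n ≥ 1, where φ is Euler's totient function. -/
/-! Since `a ^ n - b ^ n = ∏_{d ∣ n} Φ_d(a, b)`, Möbius inversion writes
`log ‖Φ_n(a, b)‖ - φ(n) log ‖a‖` as `∑_{d ∣ n} μ(n / d) log ‖1 - (b / a) ^ d‖`, and the `d`-th term
is `O(‖b / a‖ ^ d)`. When `‖b / a‖ ≤ 1 / 2` the geometric series bounds this uniformly in `n`;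
the golden ratio case has `|β / α| = 1 / α ^ 2 < 1 / 2`. -/

open Real Complex

/-- `Φₙ := ∏_{1 ≤ k ≤ n, gcd(n,k) = 1} (α − e^{2πik/n} β)` for `n ≥ 2`, and `Φ₁ := 1`,
where `α = (1 + √5)/2` and `β = (1 − √5)/2`. -/
noncomputable def PhiFib (n : ℕ) : ℂ :=
  if n = 1 then 1
  else ∏ k ∈ (Finset.Icc 1 n).filter (fun k => Nat.gcd n k = 1),
    ((((1 + Real.sqrt 5) / 2 : ℝ) : ℂ) -
      Complex.exp (2 * Real.pi * Complex.I * k / n) * (((1 - Real.sqrt 5) / 2 : ℝ) : ℂ))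

open scoped Nat

theorem sum_divisors_pow_le {r : ℝ} (hr₀ : 0 ≤ r) (hr₁ : r < 1) (n : ℕ) :
    ∑ d ∈ n.divisors, r ^ d ≤ r / (1 - r) := by
  calc ∑ d ∈ n.divisors, r ^ d ≤ ∑ d ∈ Finset.Ico 1 (n + 1), r ^ d := by
        refine Finset.sum_le_sum_of_subset_of_nonneg (fun d hd => ?_) fun _ _ _ => by positivity
        rw [Finset.mem_Ico]
        exact ⟨Nat.pos_of_mem_divisors hd, Nat.lt_succ_of_le (Nat.divisor_le hd)⟩
    _ ≤ r ^ 1 / (1 - r) := geom_sum_Ico_le_of_lt_one hr₀ hr₁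
    _ = r / (1 - r) := by rw [pow_one]

open ArithmeticFunction ArithmeticFunction.Moebius in
theorem abs_sub_totient_mul_le_sum_divisors {f g : ℕ → ℝ}
    (hfg : ∀ n > 0, ∑ d ∈ n.divisors, f d = g n) (c : ℝ) {n : ℕ} (hn : 0 < n) :
    |f n - φ n * c| ≤ ∑ d ∈ n.divisors, |g d - d * c| := by
  have hsum : ∀ m > 0, ∑ d ∈ m.divisors, (f d - φ d * c) = g m - m * c := by
    intro m hm
    rw [Finset.sum_sub_distrib, hfg m hm, ← Finset.sum_mul]
    exact_mod_cast congrArg (fun k : ℕ => g m - k * c) (Nat.sum_totient m)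
  rw [← sum_eq_iff_sum_smul_moebius_eq.mp hsum n hn]
  calc _ ≤ ∑ x ∈ n.divisorsAntidiagonal, |μ x.1 • (g x.2 - x.2 * c)| :=
        Finset.abs_sum_le_sum_abs _ _
    _ ≤ ∑ x ∈ n.divisorsAntidiagonal, |g x.2 - x.2 * c| := by
        refine Finset.sum_le_sum fun x _ => ?_
        rw [zsmul_eq_mul, abs_mul]
        exact mul_le_of_le_one_left (abs_nonneg _) (mod_cast abs_moebius_le_one)
    _ = ∑ d ∈ n.divisors, |g d - d * c| := Nat.sum_divisorsAntidiagonal' fun _ d => |g d - d * c|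

theorem abs_log_norm_one_sub_le {w : ℂ} (hw : ‖w‖ ≤ 1 / 2) :
    |Real.log ‖1 - w‖| ≤ 3 / 2 * ‖w‖ := by
  have h := Complex.norm_log_one_add_half_le_self (z := -w) (by rwa [norm_neg])
  rw [← sub_eq_add_neg, norm_neg] at h
  rw [← Complex.log_re]
  exact (Complex.abs_re_le_norm _).trans h

theorem abs_log_norm_pow_sub_pow_sub_le {a b : ℂ} (ha : a ≠ 0) (hab : 2 * ‖b‖ ≤ ‖a‖) {m : ℕ}
    (hm : m ≠ 0) :
    |Real.log ‖a ^ m - b ^ m‖ - m * Real.log ‖a‖| ≤ 3 / 2 * (‖b‖ / ‖a‖) ^ m := by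
  have hr : ‖b / a‖ ≤ 1 / 2 := by
    rw [norm_div, div_le_iff₀ (norm_pos_iff.2 ha)]; linarith
  have hrm : ‖(b / a) ^ m‖ ≤ 1 / 2 := by
    rw [norm_pow]
    exact (pow_le_of_le_one (norm_nonneg _) (hr.trans (by norm_num)) hm).trans hr
  have hne : 1 - (b / a) ^ m ≠ 0 := by
    intro h
    rw [← sub_eq_zero.mp h, norm_one] at hrm
    norm_num at hrm
  have hfactor : a ^ m - b ^ m = a ^ m * (1 - (b / a) ^ m) := by
    rw [div_pow, mul_sub, mul_one, mul_div_cancel₀ _ (pow_ne_zero m ha)]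
  rw [hfactor, norm_mul, Real.log_mul (by simpa using pow_ne_zero m ha) (norm_ne_zero_iff.2 hne),
    norm_pow, Real.log_pow, add_sub_cancel_left]
  simpa only [norm_pow, norm_div] using abs_log_norm_one_sub_le hrm

/-- `b ^ φ(n) Φ_n(a / b)` for the `n`-th cyclotomic polynomial `Φ_n`. -/
noncomputable def homogenizedCyclotomic (n : ℕ) (a b : ℂ) : ℂ :=
  ∏ ζ ∈ primitiveRoots n ℂ, (a - ζ * b)

theorem prod_divisors_homogenizedCyclotomic {n : ℕ} (hn : 0 < n) (a b : ℂ) :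
    ∏ d ∈ n.divisors, homogenizedCyclotomic d a b = a ^ n - b ^ n := by
  classical
  rw [(Complex.isPrimitiveRoot_exp n hn.ne').pow_sub_pow_eq_prod_sub_mul a b hn,
    IsPrimitiveRoot.nthRoots_one_eq_biUnion_primitiveRoots,
    Finset.prod_biUnion fun i _ j _ hij => IsPrimitiveRoot.disjoint hij]
  rfl

theorem homogenizedCyclotomic_ne_zero (n : ℕ) {a b : ℂ} (hab : ‖b‖ < ‖a‖) :
    homogenizedCyclotomic n a b ≠ 0 := by
  refine Finset.prod_ne_zero_iff.2 fun ζ hζ h => hab.ne' ?_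
  have hn : n ≠ 0 := by rintro rfl; simp at hζ
  have hζ1 : ‖ζ‖ = 1 := (isPrimitiveRoot_of_mem_primitiveRoots hζ).norm'_eq_one hn
  rw [sub_eq_zero.mp h, norm_mul, hζ1, one_mul]

theorem abs_log_norm_homogenizedCyclotomic_sub_le {a b : ℂ} (ha : a ≠ 0) (hab : 2 * ‖b‖ ≤ ‖a‖)
    {n : ℕ} (hn : 0 < n) :
    |Real.log ‖homogenizedCyclotomic n a b‖ - φ n * Real.log ‖a‖| ≤ 3 / 2 := by
  have ha' : 0 < ‖a‖ := norm_pos_iff.2 ha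
  set r := ‖b‖ / ‖a‖
  have hr₀ : 0 ≤ r := by positivity
  have hr : r ≤ 1 / 2 := by rw [div_le_iff₀ ha']; linarith
  have hlog : ∀ m > 0, ∑ d ∈ m.divisors, Real.log ‖homogenizedCyclotomic d a b‖ =
      Real.log ‖a ^ m - b ^ m‖ := by
    intro m hm
    rw [← prod_divisors_homogenizedCyclotomic hm, norm_prod, Real.log_prod]
    exact fun d _ => norm_ne_zero_iff.2
      (homogenizedCyclotomic_ne_zero d (by linarith [norm_nonneg b]))
  calc _ ≤ ∑ d ∈ n.divisors, |Real.log ‖a ^ d - b ^ d‖ - d * Real.log ‖a‖| :=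
        abs_sub_totient_mul_le_sum_divisors hlog _ hn
    _ ≤ ∑ d ∈ n.divisors, 3 / 2 * r ^ d := Finset.sum_le_sum fun d hd =>
        abs_log_norm_pow_sub_pow_sub_le ha hab (Nat.pos_of_mem_divisors hd).ne'
    _ ≤ 3 / 2 * (r / (1 - r)) := by
        rw [← Finset.mul_sum]
        gcongr
        exact sum_divisors_pow_le hr₀ (by linarith) n
    _ ≤ 3 / 2 := by
        have : r / (1 - r) ≤ 1 := by rw [div_le_one (by linarith)]; linarith
        linarith

theorem prod_coprime_exp_eq_prod_primitiveRoots {M : Type*} [CommMonoid M] {n : ℕ} (hn : 1 < n)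
    (f : ℂ → M) :
    ∏ k ∈ (Finset.Icc 1 n).filter (fun k => n.gcd k = 1), f (exp (2 * π * I * k / n)) =
      ∏ ζ ∈ primitiveRoots n ℂ, f ζ := by
  have hn₀ : n ≠ 0 := by omega
  have hexp : ∀ k : ℕ, exp (2 * π * I * k / n) = exp (2 * π * I / n) ^ k := fun k => by
    rw [← Complex.exp_nat_mul]; ring_nf
  have hlt : ∀ k ∈ (Finset.Icc 1 n).filter (fun k => n.gcd k = 1), k < n := by
    intro k hk
    simp only [Finset.mem_filter, Finset.mem_Icc] at hk
    refine hk.1.2.lt_of_ne ?_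
    rintro rfl
    rw [Nat.gcd_self] at hk
    omega
  refine Finset.prod_nbij _ (fun k hk => ?_) (fun k hk j hj hkj => ?_) (fun ζ hζ => ?_)
    fun _ _ => rfl
  · rw [Finset.mem_filter] at hk
    rw [mem_primitiveRoots (by omega), mul_div_assoc]
    exact Complex.isPrimitiveRoot_exp_of_coprime k n hn₀ (Nat.coprime_comm.mp hk.2)
  · simp only [hexp] at hkj
    exact (Complex.isPrimitiveRoot_exp n hn₀).pow_inj (hlt k hk) (hlt j hj) hkj
  · rw [Finset.mem_coe, mem_primitiveRoots (by omega), Complex.isPrimitiveRoot_iff ζ n hn₀] at hζ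
    obtain ⟨i, hi, hcop, rfl⟩ := hζ
    have hi₀ : i ≠ 0 := by rintro rfl; simp at hcop; omega
    refine ⟨i, ?_, by simp only [mul_div_assoc]⟩
    simp only [Finset.mem_coe, Finset.mem_filter, Finset.mem_Icc]
    exact ⟨⟨by omega, hi.le⟩, Nat.coprime_comm.mp hcop⟩

theorem PhiFib_eq_homogenizedCyclotomic {n : ℕ} (hn : 1 < n) :
    PhiFib n = homogenizedCyclotomic n goldenRatio goldenConj := by
  rw [PhiFib, if_neg hn.ne', prod_coprime_exp_eq_prod_primitiveRoots hn
    fun ζ => (goldenRatio : ℂ) - ζ * goldenConj]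
  rfl

theorem two_mul_abs_goldenConj_le_goldenRatio : 2 * |goldenConj| ≤ goldenRatio := by
  rw [abs_of_neg goldenConj_neg]
  linarith [goldenRatio_add_goldenConj, goldenRatio_lt_two]

/-- There is a constant `C > 0` with `|log Φₙ − φ(n) log α| ≤ C` for every
`n ≥ 1`, where `φ` is Euler's totient function. Here `A n` is the natural number whose value
is `Φₙ`. -/
theorem log_PhiFib_eq_totient_mul_log_goldenRatio
    (A : ℕ → ℕ) (hA : ∀ n, 1 ≤ n → (A n : ℂ) = PhiFib n) :
    ∃ C : ℝ, 0 < C ∧ ∀ n : ℕ, 1 ≤ n →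
      |Real.log (A n) - (Nat.totient n : ℝ) * Real.log ((1 + Real.sqrt 5) / 2)| ≤ C := by
  refine ⟨3 / 2, by norm_num, fun n hn => ?_⟩
  rcases hn.eq_or_lt with rfl | hn
  · have hA₁ : A 1 = 1 := by exact_mod_cast (hA 1 le_rfl).trans (if_pos rfl)
    rw [hA₁, Nat.cast_one, Real.log_one, Nat.totient_one, Nat.cast_one, one_mul, zero_sub,
      abs_neg, abs_of_nonneg (Real.log_nonneg one_lt_goldenRatio.le)]
    linarith [Real.log_le_sub_one_of_pos goldenRatio_pos, goldenRatio_lt_two]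
  · have hAn : (A n : ℝ) = ‖homogenizedCyclotomic n goldenRatio goldenConj‖ := by
      rw [← PhiFib_eq_homogenizedCyclotomic hn, ← hA n hn.le, Complex.norm_natCast]
    have h := abs_log_norm_homogenizedCyclotomic_sub_le (a := goldenRatio) (b := goldenConj)
      (mod_cast goldenRatio_ne_zero)
      (by simpa only [Complex.norm_real, Real.norm_eq_abs, abs_of_pos goldenRatio_pos]
        using two_mul_abs_goldenConj_le_goldenRatio) (by omega : 0 < n)
    rwa [Complex.norm_real, Real.norm_of_nonneg goldenRatio_pos.le, ← hAn] at h
end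

section
/- For every integer n ≥ 1, the number Φ_n is a positive integer, and moreover F_n = ∏_{d | n} Φ_d and L_n = ∏_{d | 2n, d ∤ n} Φ_d. -/
open Real Complex

/-- The Lucas numbers: `L₁ = 1`, `L₂ = 3`, `L_{n+2} = L_{n+1} + L_n` (with `L₀ = 2`). -/
def lucas : ℕ → ℕ
  | 0 => 2
  | 1 => 1
  | n + 2 => lucas (n + 1) + lucas n

/-! For `n ≠ 1`, `Φₙ = ∏ (α - μβ)` over the primitive `n`-th roots of unity `μ`. Grouping the
`n`-th roots of unity by their order gives `(α - β) ∏_{d ∣ n} Φ_d = ∏_{μⁿ = 1} (α - μβ) = αⁿ - βⁿ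
= √5 Fₙ`, the factor `α - β = √5` being the `d = 1` term that `Φ₁ = 1` omits. By strong induction
`Φₙ = Fₙ / ∏_{d ∣ n, d < n} Φ_d` is then a positive rational; being a product of algebraic
integers it is a positive integer. The Lucas identity follows from `F₂ₙ = Fₙ Lₙ`. -/

open Finset

section PrimitiveRoots

variable {R M : Type*} [CommRing R] [IsDomain R] [CommMonoid M]

theorem IsPrimitiveRoot.prod_primitiveRoots_eq_prod_pow {ζ : R} {k : ℕ} (h : IsPrimitiveRoot ζ k)
    (f : R → M) : ∏ μ ∈ primitiveRoots k R, f μ = ∏ i ∈ (range k).filter k.Coprime, f (ζ ^ i) := by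
  rcases Nat.eq_zero_or_pos k with rfl | hk
  · simp
  symm
  refine prod_bij (fun i _ ↦ ζ ^ i) ?_ ?_ ?_ fun _ _ ↦ rfl
  · simp only [mem_filter, mem_range, mem_primitiveRoots hk]
    exact fun i hi ↦ h.pow_of_coprime i (Nat.coprime_comm.mp hi.2)
  · simp only [mem_filter, mem_range]
    exact fun i hi j hj ↦ h.pow_inj hi.1 hj.1
  · have : NeZero k := ⟨hk.ne'⟩
    simp only [mem_primitiveRoots hk, h.isPrimitiveRoot_iff, mem_filter, mem_range]
    rintro _ ⟨i, hik, hi, rfl⟩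
    exact ⟨i, ⟨hik, Nat.coprime_comm.mp hi⟩, rfl⟩

theorem IsPrimitiveRoot.prod_divisors_prod_primitiveRoots_sub_mul {ζ : R} {n : ℕ}
    (h : IsPrimitiveRoot ζ n) (hn : 0 < n) (x y : R) :
    ∏ d ∈ n.divisors, ∏ μ ∈ primitiveRoots d R, (x - μ * y) = x ^ n - y ^ n := by
  classical
  rw [h.pow_sub_pow_eq_prod_sub_mul x y hn, nthRoots_one_eq_biUnion_primitiveRoots,
    prod_biUnion fun _ _ _ _ hne ↦ IsPrimitiveRoot.disjoint hne]

end PrimitiveRoots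

theorem isIntegral_of_sq_eq_add_one {A : Type*} [Ring A] {x : A} (h : x ^ 2 = x + 1) :
    IsIntegral ℤ x := by
  refine ⟨Polynomial.X ^ 2 - Polynomial.X - 1, by monicity!, ?_⟩
  simp [h]

theorem exists_int_eq_of_isIntegral_ratCast {K : Type*} [Field K] [CharZero K] {q : ℚ}
    (h : IsIntegral ℤ (q : K)) : ∃ j : ℤ, (j : ℚ) = q := by
  rw [← eq_ratCast (algebraMap ℚ K), isIntegral_algebraMap_iff (algebraMap ℚ K).injective] at h
  exact IsIntegrallyClosed.isIntegral_iff.mp h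

theorem filter_Icc_gcd_eq_filter_range_coprime {d : ℕ} (hd : d ≠ 1) :
    (Icc 1 d).filter (fun k ↦ d.gcd k = 1) = (range d).filter d.Coprime := by
  ext k
  simp only [mem_filter, mem_Icc, mem_range, Nat.Coprime]
  constructor
  · rintro ⟨⟨-, hkd⟩, hk⟩
    refine ⟨hkd.lt_of_ne ?_, hk⟩
    rintro rfl
    exact hd (by simpa using hk)
  · rintro ⟨hkd, hk⟩
    refine ⟨⟨Nat.pos_of_ne_zero ?_, hkd.le⟩, hk⟩
    rintro rfl
    exact hd (by simpa using hk)

theorem PhiFib_one : PhiFib 1 = 1 := if_pos rfl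

theorem PhiFib_eq_prod_primitiveRoots {n : ℕ} (hn : n ≠ 1) :
    PhiFib n = ∏ μ ∈ primitiveRoots n ℂ, ((goldenRatio : ℂ) - μ * goldenConj) := by
  rcases eq_or_ne n 0 with rfl | hn₀
  · simp [PhiFib]
  rw [PhiFib, if_neg hn, filter_Icc_gcd_eq_filter_range_coprime hn,
    (Complex.isPrimitiveRoot_exp n hn₀).prod_primitiveRoots_eq_prod_pow]
  refine prod_congr rfl fun k _ ↦ ?_
  rw [← Complex.exp_nat_mul]
  congr 3
  field_simp

theorem prod_divisors_PhiFib {n : ℕ} (hn : n ≠ 0) : ∏ d ∈ n.divisors, PhiFib d = Nat.fib n := by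
  set P : ℕ → ℂ := fun d ↦ ∏ μ ∈ primitiveRoots d ℂ, ((goldenRatio : ℂ) - μ * goldenConj)
  have h5 : (√5 : ℂ) ≠ 0 := by exact_mod_cast (by positivity : √5 ≠ 0)
  have hbinet : goldenRatio ^ n - goldenConj ^ n = √5 * Nat.fib n := by
    rw [coe_fib_eq]
    field_simp
  have hone : 1 ∈ n.divisors := Nat.one_mem_divisors.mpr hn
  refine mul_left_cancel₀ h5 ?_
  calc √5 * ∏ d ∈ n.divisors, PhiFib d
      = P 1 * ∏ d ∈ n.divisors.erase 1, P d := by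
        rw [← mul_prod_erase _ _ hone, PhiFib_one, one_mul]
        congr 1
        · simp only [P, IsPrimitiveRoot.primitiveRoots_one, prod_singleton, one_mul]
          exact_mod_cast goldenRatio_sub_goldenConj.symm
        · exact prod_congr rfl fun d hd ↦ PhiFib_eq_prod_primitiveRoots (ne_of_mem_erase hd)
    _ = goldenRatio ^ n - goldenConj ^ n := by
        rw [mul_prod_erase _ _ hone,
          (Complex.isPrimitiveRoot_exp n hn).prod_divisors_prod_primitiveRoots_sub_mul
            (Nat.pos_of_ne_zero hn)]
    _ = √5 * Nat.fib n := by exact_mod_cast hbinet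

theorem isIntegral_PhiFib (n : ℕ) : IsIntegral ℤ (PhiFib n) := by
  rcases eq_or_ne n 1 with rfl | hn
  · exact PhiFib_one ▸ isIntegral_one
  rw [PhiFib_eq_prod_primitiveRoots hn]
  refine IsIntegral.prod _ fun μ hμ ↦ ?_
  have hgold : IsIntegral ℤ (goldenRatio : ℂ) :=
    isIntegral_of_sq_eq_add_one (by exact_mod_cast goldenRatio_sq)
  have hconj : IsIntegral ℤ (goldenConj : ℂ) :=
    isIntegral_of_sq_eq_add_one (by exact_mod_cast goldenConj_sq)
  exact hgold.sub ((isPrimitiveRoot_of_mem_primitiveRoots hμ).isIntegral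
    (Nat.pos_of_ne_zero fun h ↦ by simp [h] at hμ) |>.mul hconj)

theorem exists_pos_nat_eq_PhiFib (n : ℕ) : ∃ m : ℕ, 0 < m ∧ (m : ℂ) = PhiFib n := by
  induction n using Nat.strong_induction_on with | _ n ih => ?_
  rcases eq_or_ne n 0 with rfl | hn
  · exact ⟨1, one_pos, by simp [PhiFib]⟩
  obtain ⟨M, hM, hMeq⟩ : ∃ M : ℕ, 0 < M ∧ (M : ℂ) = ∏ d ∈ n.divisors.erase n, PhiFib d := by
    refine prod_induction _ (fun z ↦ ∃ m : ℕ, 0 < m ∧ (m : ℂ) = z)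
      (fun _ _ ⟨a, ha, hax⟩ ⟨b, hb, hby⟩ ↦
        ⟨a * b, Nat.mul_pos ha hb, by push_cast [hax, hby]; rfl⟩)
      ⟨1, one_pos, Nat.cast_one⟩ fun d hd ↦ ih d ?_
    obtain ⟨hdn, hd⟩ := mem_erase.mp hd
    exact (Nat.divisor_le hd).lt_of_ne hdn
  have hmul : PhiFib n * M = Nat.fib n := by
    rw [hMeq, ← prod_divisors_PhiFib hn, mul_prod_erase _ _ (Nat.mem_divisors_self n hn)]
  have hrat : PhiFib n = ((Nat.fib n / M : ℚ) : ℂ) := by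
    push_cast
    rw [← hmul, mul_div_cancel_right₀ _ (by exact_mod_cast hM.ne')]
  obtain ⟨j, hj⟩ := exists_int_eq_of_isIntegral_ratCast (hrat ▸ isIntegral_PhiFib n)
  have hj₀ : 0 < j := by
    have hfib_pos : 0 < Nat.fib n := Nat.fib_pos.mpr (Nat.pos_of_ne_zero hn)
    have : (0 : ℚ) < Nat.fib n / M := div_pos (by exact_mod_cast hfib_pos) (by exact_mod_cast hM)
    rw [← hj] at this
    exact_mod_cast this
  lift j to ℕ using hj₀.le
  exact ⟨j, by exact_mod_cast hj₀, by rw [hrat, ← hj]; push_cast; rfl⟩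

theorem lucas_add_fib (n : ℕ) : lucas n + Nat.fib n = 2 * Nat.fib (n + 1) := by
  induction n using Nat.twoStepInduction with
  | zero => rfl
  | one => rfl
  | more n ih₁ ih₂ =>
    rw [lucas, Nat.fib_add_two, Nat.fib_add_two (n := n + 1)]
    omega

theorem fib_two_mul_eq_fib_mul_lucas (n : ℕ) : Nat.fib (2 * n) = Nat.fib n * lucas n := by
  rw [Nat.fib_two_mul, ← lucas_add_fib, Nat.add_sub_cancel]

/-- Each `Φₙ` (for `n ≥ 1`) is a positive integer, and moreover
`Fₙ = ∏_{d ∣ n} Φ_d` and `Lₙ = ∏_{d ∣ 2n, d ∤ n} Φ_d`. -/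
theorem fib_lucas_eq_prod_PhiFib :
    ∃ A : ℕ → ℕ,
      (∀ n, 1 ≤ n → 0 < A n ∧ (A n : ℂ) = PhiFib n) ∧
      (∀ n, 1 ≤ n →
        Nat.fib n = ∏ d ∈ n.divisors, A d ∧
        lucas n = ∏ d ∈ (2 * n).divisors \ n.divisors, A d) := by
  choose A hA₀ hA using exists_pos_nat_eq_PhiFib
  have hfib : ∀ n ≠ 0, Nat.fib n = ∏ d ∈ n.divisors, A d := fun n hn ↦ by
    have : (Nat.fib n : ℂ) = ∏ d ∈ n.divisors, (A d : ℂ) := by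
      simp only [hA, prod_divisors_PhiFib hn]
    exact_mod_cast this
  refine ⟨A, fun n _ ↦ ⟨hA₀ n, hA n⟩, fun n hn ↦ ⟨hfib n (by omega), ?_⟩⟩
  have hsplit := prod_sdiff (f := A) (Nat.divisors_subset_of_dvd (by omega) (dvd_mul_left n 2))
  have hfib_pos : 0 < Nat.fib n := Nat.fib_pos.mpr hn
  refine Nat.eq_of_mul_eq_mul_left hfib_pos ?_
  rw [← fib_two_mul_eq_fib_mul_lucas, hfib n (by omega), hfib (2 * n) (by omega), ← hsplit,
    mul_comm]
end

section
/- Let r, m be positive integers, let S be the set of s ∈ {1, ..., m} such that there exists an odd integer t ≥ 1 with s·t ≡ r (mod m), and for each s ∈ S let t(s) be the minimal such odd t. Then for all real x ≥ 1, ⋃_{n ∈ A_{r,m}(x)} D′(n) = ⋃_{s ∈ S} A_{2s,2m}(2x / t(s)). -/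
/-!
A divisor `d` of `2n` that does not divide `n` is exactly `d = 2k` with `n = k u`, `u` odd.
So `2k` lies in the left-hand union iff some odd multiple `k u` lies in `A_{r,m}(x)`. Only the
residue `s` of `k` modulo `m` matters for the congruence `k u ≡ r`, so the cheapest such multiple
is `k t(s)`, and the condition becomes `k t(s) ≤ x`, i.e. `2k ∈ A_{2s,2m}(2x / t(s))`.
-/

/-- `A_{r,m}(x) := {n ≥ 1 : n ≤ x and n ≡ r (mod m)}`. -/
def Aset (r m : ℕ) (x : ℝ) : Set ℕ :=
  {n | 0 < n ∧ (n : ℝ) ≤ x ∧ n ≡ r [MOD m]}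

theorem dvd_two_mul_and_not_dvd_iff {d n : ℕ} (hn : n ≠ 0) :
    d ∣ 2 * n ∧ ¬ d ∣ n ↔ ∃ k u, d = 2 * k ∧ n = k * u ∧ Odd u := by
  constructor
  · rintro ⟨hd2n, hdn⟩
    obtain ⟨k, rfl⟩ : 2 ∣ d := by
      by_contra hd
      exact hdn ((Nat.prime_two.coprime_iff_not_dvd.mpr hd).symm.dvd_of_dvd_mul_left hd2n)
    obtain ⟨u, rfl⟩ := (mul_dvd_mul_iff_left two_ne_zero).mp hd2n
    refine ⟨k, u, rfl, rfl, Nat.not_even_iff_odd.mp ?_⟩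
    rintro ⟨c, rfl⟩
    exact hdn ⟨c, by ring⟩
  · rintro ⟨k, u, rfl, rfl, hu⟩
    have hk : 0 < k := Nat.pos_of_ne_zero (left_ne_zero_of_mul hn)
    refine ⟨mul_dvd_mul_left 2 (dvd_mul_right k u), fun h => hu.not_two_dvd_nat ?_⟩
    rwa [mul_comm k u, Nat.mul_dvd_mul_iff_right hk] at h

theorem exists_modEq_mem_Icc (k : ℕ) {m : ℕ} (hm : 0 < m) :
    ∃ s ∈ Set.Icc 1 m, s ≡ k [MOD m] := by
  by_cases hk : m ∣ k
  · exact ⟨m, ⟨hm, le_rfl⟩, (Nat.modEq_zero_iff_dvd.mpr dvd_rfl).trans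
      (Nat.modEq_zero_iff_dvd.mpr hk).symm⟩
  · have : k % m ≠ 0 := fun h => hk (Nat.dvd_of_mod_eq_zero h)
    exact ⟨k % m, ⟨by omega, (Nat.mod_lt k hm).le⟩, Nat.mod_modEq k m⟩

theorem mem_Aset_two_mul_iff {d s m : ℕ} {y : ℝ} :
    d ∈ Aset (2 * s) (2 * m) (2 * y) ↔ ∃ k ∈ Aset s m y, d = 2 * k := by
  constructor
  · rintro ⟨hd, hdy, hds⟩
    obtain ⟨k, rfl⟩ : 2 ∣ d := by
      have h := Nat.ModEq.of_mul_right m hds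
      rw [Nat.ModEq, Nat.mul_mod_right] at h
      exact Nat.dvd_of_mod_eq_zero h
    refine ⟨k, ⟨by omega, ?_, Nat.ModEq.mul_left_cancel' two_ne_zero hds⟩, rfl⟩
    push_cast at hdy
    linarith
  · rintro ⟨k, ⟨hk, hky, hks⟩, rfl⟩
    refine ⟨by omega, ?_, hks.mul_left' 2⟩
    push_cast
    linarith

theorem exists_odd_mul_mem_Aset_iff {r m s k τ : ℕ} {x : ℝ}
    (hτ : IsLeast {u | Odd u ∧ s * u ≡ r [MOD m]} τ) (hks : k ≡ s [MOD m]) :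
    (∃ u, Odd u ∧ k * u ∈ Aset r m x) ↔ k ∈ Aset s m (x / τ) := by
  have hτpos : (0 : ℝ) < τ := by exact_mod_cast hτ.1.1.pos
  simp only [Aset, Set.mem_ofPred_eq, le_div_iff₀ hτpos]
  constructor
  · rintro ⟨u, hu, hku, hkux, hkur⟩
    have hτu : τ ≤ u := hτ.2 ⟨hu, (hks.symm.mul_right u).trans hkur⟩
    refine ⟨Nat.pos_of_mul_pos_right hku, ?_, hks⟩
    calc (k : ℝ) * τ ≤ k * u := by gcongr
      _ ≤ x := by exact_mod_cast hkux
  · rintro ⟨hk, hkx, -⟩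
    exact ⟨τ, hτ.1.1, Nat.mul_pos hk hτ.1.1.pos, by exact_mod_cast hkx,
      (hks.mul_right τ).trans hτ.1.2⟩

theorem union_divisors'_Aset_general
    (r m : ℕ) (hm : 0 < m)
    (S : Set ℕ) (hS : S = {s | 1 ≤ s ∧ s ≤ m ∧ ∃ t, 1 ≤ t ∧ Odd t ∧ s * t ≡ r [MOD m]})
    (t : ℕ → ℕ)
    (ht : ∀ s ∈ S, 1 ≤ t s ∧ Odd (t s) ∧ s * t s ≡ r [MOD m] ∧
      ∀ t', 1 ≤ t' → Odd t' → s * t' ≡ r [MOD m] → t s ≤ t')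
    (x : ℝ) :
    (⋃ n ∈ Aset r m x, {d : ℕ | d ∣ 2 * n ∧ ¬ d ∣ n}) =
      ⋃ s ∈ S, Aset (2 * s) (2 * m) (2 * x / t s) := by
  have hleast (s : ℕ) (hs : s ∈ S) : IsLeast {u | Odd u ∧ s * u ≡ r [MOD m]} (t s) :=
    let ⟨_, hodd, hmod, hmin⟩ := ht s hs
    ⟨⟨hodd, hmod⟩, fun u ⟨hu, hsu⟩ => hmin u hu.pos hu hsu⟩
  ext d
  simp only [Set.mem_iUnion, Set.mem_ofPred_eq, exists_prop, mul_div_assoc, mem_Aset_two_mul_iff]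
  constructor
  · rintro ⟨n, hn, hd⟩
    obtain ⟨k, u, rfl, rfl, hu⟩ := (dvd_two_mul_and_not_dvd_iff hn.1.ne').mp hd
    obtain ⟨s, ⟨hs1, hsm⟩, hsk⟩ := exists_modEq_mem_Icc k hm
    have hsS : s ∈ S := hS ▸ ⟨hs1, hsm, u, hu.pos, hu, (hsk.mul_right u).trans hn.2.2⟩
    exact ⟨s, hsS, k, (exists_odd_mul_mem_Aset_iff (hleast s hsS) hsk.symm).mp ⟨u, hu, hn⟩, rfl⟩
  · rintro ⟨s, hsS, k, hk, rfl⟩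
    obtain ⟨u, hu, hku⟩ := (exists_odd_mul_mem_Aset_iff (hleast s hsS) hk.2.2).mpr hk
    exact ⟨k * u, hku, (dvd_two_mul_and_not_dvd_iff hku.1.ne').mpr ⟨k, u, rfl, rfl, hu⟩⟩

/-- Let `S` be the set of `s ∈ {1, …, m}` such that `s·t ≡ r (mod m)` for some
odd `t ≥ 1`, and for `s ∈ S` let `t s` be the minimal such odd `t`. Then
`⋃_{n ∈ A_{r,m}(x)} D′(n) = ⋃_{s ∈ S} A_{2s,2m}(2x / t(s))` for all `x ≥ 1`, where
`D′(n) = {d : d ∣ 2n, d ∤ n}`. -/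
theorem union_divisors'_Aset
    (r m : ℕ) (hr : 0 < r) (hm : 0 < m)
    (S : Set ℕ) (hS : S = {s | 1 ≤ s ∧ s ≤ m ∧ ∃ t, 1 ≤ t ∧ Odd t ∧ s * t ≡ r [MOD m]})
    (t : ℕ → ℕ)
    (ht : ∀ s ∈ S, 1 ≤ t s ∧ Odd (t s) ∧ s * t s ≡ r [MOD m] ∧
      ∀ t', 1 ≤ t' → Odd t' → s * t' ≡ r [MOD m] → t s ≤ t')
    (x : ℝ) (hx : 1 ≤ x) :
    (⋃ n ∈ Aset r m x, {d : ℕ | d ∣ 2 * n ∧ ¬ d ∣ n}) =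
      ⋃ s ∈ S, Aset (2 * s) (2 * m) (2 * x / t s) :=
  union_divisors'_Aset_general r m hm S hS t ht x
end
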